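/- arXiv:1202.0085 — 6 statements merged into one kernel-verified Lean document; each statement's English description precedes it below -/
import Mathlib

section
/- Let K be a field and A_1,...,A_n finite nonempty subsets of K. The vanishing ideal of the cartesian product X* = A_1 × ... × A_n in K[t_1,...,t_n] equals the ideal generated by the polynomials f_i = ∏_{γ ∈ A_i} (t_i − γ) for i = 1,...,n. -/
open MvPolynomial

namespace MvPolynomial

variable {R σ : Type*} [CommRing R]

theorem eval_eq_zero_of_mem_span_prod_X_sub_C (S : σ → Finset R) {x : σ → R}
    (hx : ∀ i, x i ∈ S i) {f : MvPolynomial σ R}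
    (hf : f ∈ Ideal.span (Set.range fun i => ∏ r ∈ S i, (X i - C r))) :
    eval x f = 0 := by
  refine (Ideal.span_le (I := RingHom.ker (eval x))).mpr ?_ hf
  rintro _ ⟨i, rfl⟩
  simpa [map_prod] using Finset.prod_eq_zero (hx i) (sub_self (x i))

/-- Division by the generators, which are monic in distinct variables, leaves a remainder of
degree `< #(S i)` in each `X i` vanishing on the grid, hence zero (Alon's Nullstellensatz). -/
theorem mem_span_prod_X_sub_C_of_eval_eq_zero [IsDomain R] [Finite σ] (S : σ → Finset R)
    (hS : ∀ i, (S i).Nonempty) {f : MvPolynomial σ R}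
    (hf : ∀ x : σ → R, (∀ i, x i ∈ S i) → eval x f = 0) :
    f ∈ Ideal.span (Set.range fun i => ∏ r ∈ S i, (X i - C r)) := by
  obtain ⟨h, -, rfl⟩ := combinatorial_nullstellensatz_exists_linearCombination S hS f hf
  rw [Ideal.span, ← Finsupp.range_linearCombination]
  exact LinearMap.mem_range_self _ h

end MvPolynomial

theorem stmt_1 {K : Type*} [Field K] (n : ℕ) (A : Fin n → Finset K)
    (hA : ∀ i, (A i).Nonempty) (f : MvPolynomial (Fin n) K) :
    (∀ x : Fin n → K, (∀ i, x i ∈ A i) → MvPolynomial.eval x f = 0) ↔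
      f ∈ Ideal.span (Set.range fun i : Fin n =>
        ∏ γ ∈ A i, (MvPolynomial.X i - MvPolynomial.C γ)) :=
  ⟨mem_span_prod_X_sub_C_of_eval_eq_zero A hA,
    fun hf _ hx => eval_eq_zero_of_mem_span_prod_X_sub_C A hx hf⟩
end

section
/- Let K be a field, A_1,...,A_n nonempty finite subsets of K with d_i = |A_i| and d_i ≤ d_{i+1} for all i, and n ≥ 2. If G ∈ K[t_1,...,t_n] is a nonzero polynomial of total degree d, then the number of zeros of G in A_1 × ... × A_n is at most d_2 ⋯ d_n · d. -/
/-! Schwartz–Zippel bounds the proportion of zeros of `G` in `A₁ × ⋯ × Aₙ` by the maximum over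
monomials `t^s` of `G` of `∑ sᵢ / dᵢ`, which is at most `d / d₁` because `d₁` is the smallest `dᵢ`.
Multiplying by `d₁ ⋯ dₙ` gives the bound. -/

open MvPolynomial Finset

namespace MvPolynomial

variable {R : Type*} [CommRing R] [IsDomain R] [DecidableEq R]

theorem card_zeros_mul_le_prod_card_mul_totalDegree {n : ℕ} {p : MvPolynomial (Fin n) R}
    (hp : p ≠ 0) (S : Fin n → Finset R) {m : ℕ} (hm : ∀ i, m ≤ #(S i)) :
    #{x ∈ Fintype.piFinset S | eval x p = 0} * m ≤ (∏ i, #(S i)) * p.totalDegree := by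
  obtain rfl | hm0 := m.eq_zero_or_pos
  · simp
  have hS : ∀ i, 0 < #(S i) := fun i => hm0.trans_le (hm i)
  have hsup : (p.support.sup fun s ↦ ∑ i, (s i / #(S i) : ℚ≥0)) ≤ p.totalDegree / m :=
    Finset.sup_le fun s hs => calc
      ∑ i, (s i / #(S i) : ℚ≥0) ≤ ∑ i, (s i / m : ℚ≥0) := by
        gcongr with i
        exact hm i
      _ = ((s.sum fun _ e => e : ℕ) : ℚ≥0) / m := by
        rw [← sum_div, Finsupp.sum_fintype _ _ (fun _ => rfl)]
        push_cast
        rfl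
      _ ≤ p.totalDegree / m := by
        gcongr
        exact le_totalDegree hs
  have h := (schwartz_zippel_sup_sum hp S).trans hsup
  rw [div_le_div_iff₀ (prod_pos fun i _ => by exact_mod_cast hS i) (by positivity),
    mul_comm (p.totalDegree : ℚ≥0)] at h
  exact_mod_cast h

end MvPolynomial

theorem stmt_3 {K : Type*} [Field K] [DecidableEq K] (n : ℕ) (hn : 2 ≤ n)
    (A : Fin n → Finset K) (hA : ∀ i, (A i).Nonempty)
    (hmono : ∀ i j : Fin n, i ≤ j → (A i).card ≤ (A j).card)
    (G : MvPolynomial (Fin n) K) (hG : G ≠ 0) :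
    ((Fintype.piFinset A).filter fun x => MvPolynomial.eval x G = 0).card ≤
      (∏ i ∈ Finset.univ.filter (fun i : Fin n => 0 < (i : ℕ)), (A i).card) * G.totalDegree := by
  obtain ⟨k, rfl⟩ : ∃ k, n = k + 1 := ⟨n - 1, by omega⟩
  have h := card_zeros_mul_le_prod_card_mul_totalDegree hG A fun i => hmono 0 i (Fin.zero_le i)
  have htail : ∏ i ∈ univ.filter (fun i : Fin (k + 1) => 0 < (i : ℕ)), #(A i) =
      ∏ i : Fin k, #(A i.succ) := by
    rw [prod_filter, Fin.prod_univ_succ]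
    simp
  rw [Fin.prod_univ_succ, mul_assoc, mul_comm] at h
  rw [htail]
  exact le_of_mul_le_mul_left h (hA 0).card_pos
end

section
/- Let d_1 ≤ d_2 ≤ ... ≤ d_{n-1} be positive integers, and let d = Σ_{i=1}^{k}(d_i − 1) + ℓ and d' = Σ_{i=1}^{k'}(d_i − 1) + ℓ' with 0 ≤ k, k' ≤ n−2, 1 ≤ ℓ ≤ d_{k+1} − 1, and 1 ≤ ℓ' ≤ d_{k'+1} − 1. If d' ≤ d, then k' ≤ k and −d_{k'+1} ⋯ d_{n−1} + ℓ' d_{k'+2} ⋯ d_{n−1} ≤ −d_{k+1} ⋯ d_{n−1} + ℓ d_{k+2} ⋯ d_{n−1}. -/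
theorem stmt_5 (n : ℕ) (hn : 2 ≤ n) (d : ℕ → ℕ)
    (hpos : ∀ i, 1 ≤ i → i ≤ n - 1 → 1 ≤ d i)
    (hmono : ∀ i j, 1 ≤ i → i ≤ j → j ≤ n - 1 → d i ≤ d j)
    (k k' ℓ ℓ' D D' : ℕ)
    (hk : k ≤ n - 2) (hk' : k' ≤ n - 2)
    (hl1 : 1 ≤ ℓ) (hl2 : ℓ ≤ d (k + 1) - 1)
    (hl1' : 1 ≤ ℓ') (hl2' : ℓ' ≤ d (k' + 1) - 1)
    (hD : D = (∑ i ∈ Finset.Icc 1 k, (d i - 1)) + ℓ)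
    (hD' : D' = (∑ i ∈ Finset.Icc 1 k', (d i - 1)) + ℓ')
    (hle : D' ≤ D) :
    k' ≤ k ∧
      -(∏ i ∈ Finset.Icc (k' + 1) (n - 1), (d i : ℤ)) +
          (ℓ' : ℤ) * ∏ i ∈ Finset.Icc (k' + 2) (n - 1), (d i : ℤ) ≤
        -(∏ i ∈ Finset.Icc (k + 1) (n - 1), (d i : ℤ)) +
          (ℓ : ℤ) * ∏ i ∈ Finset.Icc (k + 2) (n - 1), (d i : ℤ) := by
  have hIccIoc : ∀ a b : ℕ, Finset.Icc (a + 1) b = Finset.Ioc a b := by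
    intro a b; ext x; simp only [Finset.mem_Icc, Finset.mem_Ioc]; omega
  have hkn : k + 1 ≤ n - 1 := by omega
  have hkn' : k' + 1 ≤ n - 1 := by omega
  have hdk : 2 ≤ d (k + 1) := by
    have := hpos (k + 1) (by omega) hkn
    omega
  have hdk' : 2 ≤ d (k' + 1) := by
    have := hpos (k' + 1) (by omega) hkn'
    omega
  -- first part: k' ≤ k
  have hkk : k' ≤ k := by
    by_contra h
    push_neg at h
    have hsplit : ∑ i ∈ Finset.Icc 1 k', (d i - 1)
        = (∑ i ∈ Finset.Icc 1 k, (d i - 1)) + ∑ i ∈ Finset.Ioc k k', (d i - 1) := by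
      rw [show Finset.Icc 1 k' = Finset.Ioc 0 k' from hIccIoc 0 k',
        show Finset.Icc 1 k = Finset.Ioc 0 k from hIccIoc 0 k]
      exact (Finset.sum_Ioc_consecutive _ (Nat.zero_le k) (le_of_lt h)).symm
    have hmem : k + 1 ∈ Finset.Ioc k k' := by simp [Finset.mem_Ioc]; omega
    have hsingle : d (k + 1) - 1 ≤ ∑ i ∈ Finset.Ioc k k', (d i - 1) :=
      Finset.single_le_sum (f := fun i => d i - 1) (fun i _ => Nat.zero_le _) hmem
    omega
  refine ⟨hkk, ?_⟩
  -- product facts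
  have hP : ∀ j, j ≤ n - 1 → (∏ i ∈ Finset.Icc j (n - 1), (d i : ℤ))
      = (d j : ℤ) * ∏ i ∈ Finset.Icc (j + 1) (n - 1), (d i : ℤ) := by
    intro j hj
    rw [hIccIoc, ← Finset.Ioc_insert_left hj, Finset.prod_insert]
    simp
  have hPposN : ∀ j, 1 ≤ j → 1 ≤ ∏ i ∈ Finset.Icc j (n - 1), d i := by
    intro j hj
    apply Finset.one_le_prod'
    intro i hi
    simp only [Finset.mem_Icc] at hi
    exact hpos i (by omega) hi.2
  have hPpos : ∀ j, 1 ≤ j → 1 ≤ (∏ i ∈ Finset.Icc j (n - 1), (d i : ℤ)) := by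
    intro j hj
    have := hPposN j hj
    exact_mod_cast this
  rw [hP _ hkn, hP _ hkn']
  set P2 := ∏ i ∈ Finset.Icc (k + 2) (n - 1), (d i : ℤ) with hP2
  set P2' := ∏ i ∈ Finset.Icc (k' + 2) (n - 1), (d i : ℤ) with hP2'
  have h2 : (1:ℤ) ≤ P2 := hPpos _ (by omega)
  rcases eq_or_lt_of_le hkk with rfl | hlt
  · -- k' = k : reduces to ℓ' ≤ ℓ
    have hll : ℓ' ≤ ℓ := by omega
    have : (ℓ' : ℤ) ≤ (ℓ : ℤ) := by exact_mod_cast hll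
    nlinarith
  · -- k' < k
    have hsplitP : P2' = (∏ i ∈ Finset.Icc (k' + 2) (k + 1), (d i : ℤ)) * P2 := by
      rw [hP2', hP2]
      have e1 : Finset.Icc (k' + 2) (n - 1) = Finset.Ico (k' + 2) n := by
        ext x; simp only [Finset.mem_Icc, Finset.mem_Ico]; omega
      have e2 : Finset.Icc (k + 2) (n - 1) = Finset.Ico (k + 2) n := by
        ext x; simp only [Finset.mem_Icc, Finset.mem_Ico]; omega
      have e3 : Finset.Icc (k' + 2) (k + 1) = Finset.Ico (k' + 2) (k + 2) := by
        ext x; simp only [Finset.mem_Icc, Finset.mem_Ico]; omega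
      rw [e1, e2, e3]
      exact (Finset.prod_Ico_consecutive _ (by omega) (by omega)).symm
    have hQN : d (k + 1) ≤ ∏ i ∈ Finset.Icc (k' + 2) (k + 1), d i := by
      apply Finset.single_le_prod' (f := fun i => d i)
      · intro i hi
        simp only [Finset.mem_Icc] at hi
        exact hpos i (by omega) (by omega)
      · simp [Finset.mem_Icc]; omega
    have hQ : (d (k + 1) : ℤ) ≤ ∏ i ∈ Finset.Icc (k' + 2) (k + 1), (d i : ℤ) := by
      exact_mod_cast hQN
    have hl2z : (ℓ' : ℤ) + 1 ≤ (d (k' + 1) : ℤ) := by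
      exact_mod_cast (by omega : ℓ' + 1 ≤ d (k' + 1))
    have hlz : (1:ℤ) ≤ (ℓ : ℤ) := by exact_mod_cast hl1
    have hdkz : (2:ℤ) ≤ (d (k + 1) : ℤ) := by exact_mod_cast hdk
    set Q := ∏ i ∈ Finset.Icc (k' + 2) (k + 1), (d i : ℤ) with hQdef
    rw [hsplitP]
    nlinarith [mul_nonneg (mul_nonneg (by linarith : (0:ℤ) ≤ (d (k' + 1) : ℤ) - ℓ' - 1) (by linarith : (0:ℤ) ≤ Q)) (by linarith : (0:ℤ) ≤ P2),
      mul_nonneg (by linarith : (0:ℤ) ≤ Q - (d (k + 1) : ℤ)) (by linarith : (0:ℤ) ≤ P2),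
      mul_nonneg (by linarith : (0:ℤ) ≤ (ℓ:ℤ) - 1) (by linarith : (0:ℤ) ≤ P2)]
end

section
/- Let K be a field, A_1,...,A_n nonempty finite subsets of K with d_i = |A_i|, 2 ≤ d_i ≤ d_{i+1} for all i. Let G ∈ K[t_1,...,t_n] have total degree d ≥ 1 with deg_{t_i}(G) ≤ d_i − 1 for all i. Write d = Σ_{i=1}^{k}(d_i − 1) + ℓ with 0 ≤ k ≤ n−1 and 1 ≤ ℓ ≤ d_{k+1} − 1. Then the number of zeros of G in X* = A_1 × ... × A_n satisfies |Z_{X*}(G)| ≤ d_{k+2} ⋯ d_n (d_1 ⋯ d_{k+1} − d_{k+1} + ℓ), with the convention d_{k+2} ⋯ d_n = 1 when k = n−1. -/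
/-!
Peeling off the first variable and passing to the leading coefficient in it (as in the proof of
Schwartz–Zippel), induction on the number of variables gives a monomial `t^u` of `G` such that `G`
does not vanish on at least `∏ (dᵢ - uᵢ)` points of the grid (Alon–Füredi). Here `uᵢ < dᵢ` and
`∑ uᵢ ≤ d`, and for increasing `dᵢ` the least value of `∏ (dᵢ - uᵢ)` under these constraints is
obtained by spending the budget `d` greedily on the smallest `dᵢ`: the first `k` factors drop to
`1`, the next one to `d_{k+1} - ℓ`. So at least `(d_{k+1} - ℓ) d_{k+2} ⋯ dₙ` points are non-zeros.
-/

open Finset Fintype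

theorem card_filter_piFinset_eq_sum_card_filter_cons {α : Type*} {n : ℕ}
    (A : Fin (n + 1) → Finset α) (P : (Fin (n + 1) → α) → Prop) [DecidablePred P] :
    #{x ∈ piFinset A | P x} = ∑ y ∈ piFinset (Fin.tail A), #{a ∈ A 0 | P (Fin.cons a y)} := by
  have h := filter_piFinset_eq_map_consEquiv A (fun _ => True)
  simp only [filter_true] at h
  rw [h, filter_map, card_map, card_filter, sum_product_right]
  refine sum_congr rfl fun y _ => ?_
  rw [card_filter]
  rfl

theorem Polynomial.card_sub_natDegree_le_card_filter_eval_ne_zero {R : Type*} [CommRing R]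
    [IsDomain R] [DecidableEq R] {p : Polynomial R} (hp : p ≠ 0) (s : Finset R) :
    #s - p.natDegree ≤ #{a ∈ s | p.eval a ≠ 0} := by
  have hroots : #{a ∈ s | p.eval a = 0} ≤ p.natDegree :=
    card_le_degree_of_subset_roots fun a ha => by
      simp only [mem_val, mem_filter] at ha
      exact (mem_roots hp).2 ha.2
  have := card_filter_add_card_filter_not (s := s) (fun a => p.eval a = 0)
  simp only [ne_eq]
  omega

namespace MvPolynomial

variable {R : Type*} [CommRing R] [IsDomain R] [DecidableEq R]

theorem exists_mem_support_prod_card_sub_le_card_eval_ne_zero {n : ℕ}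
    {G : MvPolynomial (Fin n) R} (hG : G ≠ 0) (A : Fin n → Finset R) :
    ∃ u ∈ G.support, ∏ i, (#(A i) - u i) ≤ #{x ∈ piFinset A | eval x G ≠ 0} := by
  induction n with
  | zero =>
    rw [G.eq_C_of_isEmpty] at hG ⊢
    refine ⟨0, by simpa using hG, ?_⟩
    simp [C_ne_zero.mp hG]
  | succ n ih =>
    set G' := finSuccEquiv R n G
    set c := G'.leadingCoeff
    have hc : c ≠ 0 := by simpa [c, G'] using hG
    obtain ⟨u, hu, hcount⟩ := ih hc (Fin.tail A)
    refine ⟨u.cons G'.natDegree, ?_, ?_⟩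
    · rwa [mem_support_iff, ← finSuccEquiv_coeff_coeff, ← mem_support_iff]
    have hfiber : ∀ y ∈ {y ∈ piFinset (Fin.tail A) | eval y c ≠ 0},
        #(A 0) - G'.natDegree ≤ #{a ∈ A 0 | eval (Fin.cons a y) G ≠ 0} := by
      intro y hy
      have hcy : eval y G'.leadingCoeff ≠ 0 := (mem_filter.1 hy).2
      have hdeg : (G'.map (eval y)).natDegree = G'.natDegree :=
        Polynomial.natDegree_map_of_leadingCoeff_ne_zero _ hcy
      have hne : G'.map (eval y) ≠ 0 := Polynomial.leadingCoeff_ne_zero.1 <| by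
        rwa [Polynomial.leadingCoeff_map_of_leadingCoeff_ne_zero _ hcy]
      simpa [eval_eq_eval_mv_eval', hdeg] using
        Polynomial.card_sub_natDegree_le_card_filter_eval_ne_zero hne (A 0)
    calc ∏ i, (#(A i) - u.cons G'.natDegree i)
        = (#(A 0) - G'.natDegree) * ∏ i, (#(Fin.tail A i) - u i) := by
          simp [Fin.prod_univ_succ, Fin.tail]
      _ ≤ (#(A 0) - G'.natDegree) * #{y ∈ piFinset (Fin.tail A) | eval y c ≠ 0} :=
          Nat.mul_le_mul_left _ hcount
      _ = ∑ y ∈ piFinset (Fin.tail A) with eval y c ≠ 0, (#(A 0) - G'.natDegree) := by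
          rw [sum_const, smul_eq_mul, mul_comm]
      _ ≤ ∑ y ∈ piFinset (Fin.tail A) with eval y c ≠ 0,
            #{a ∈ A 0 | eval (Fin.cons a y) G ≠ 0} :=
          sum_le_sum hfiber
      _ ≤ ∑ y ∈ piFinset (Fin.tail A), #{a ∈ A 0 | eval (Fin.cons a y) G ≠ 0} :=
          sum_le_sum_of_subset (filter_subset _ _)
      _ = #{x ∈ piFinset A | eval x G ≠ 0} :=
          (card_filter_piFinset_eq_sum_card_filter_cons A (eval · G ≠ 0)).symm

end MvPolynomial

/-- For monotone `D`, the least value of `∏ i, (D i - u i)` over `u` with `u i < D i` and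
`∑ i, u i ≤ B`: the budget `B` is spent on the coordinates in order, each one lowered to at
least `1`. -/
def greedyProd : {n : ℕ} → (Fin n → ℕ) → ℕ → ℕ
  | 0, _, _ => 1
  | _ + 1, D, B => (D 0 - min B (D 0 - 1)) * greedyProd (Fin.tail D) (B - (D 0 - 1))

theorem greedyProd_succ {n : ℕ} (D : Fin (n + 1) → ℕ) (B : ℕ) :
    greedyProd D B = (D 0 - min B (D 0 - 1)) * greedyProd (Fin.tail D) (B - (D 0 - 1)) := rfl

theorem greedyProd_zero : ∀ {n : ℕ} (D : Fin n → ℕ), greedyProd D 0 = ∏ i, D i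
  | 0, _ => rfl
  | _ + 1, D => by
    rw [greedyProd_succ, Fin.prod_univ_succ, Nat.zero_sub, greedyProd_zero]
    simp [Fin.tail]

theorem greedyProd_of_lt {n : ℕ} (D : Fin (n + 1) → ℕ) {B : ℕ} (hB : B < D 0) :
    greedyProd D B = (D 0 - B) * ∏ i : Fin n, D i.succ := by
  rw [greedyProd_succ, min_eq_left (by omega), show B - (D 0 - 1) = 0 by omega, greedyProd_zero]
  rfl

theorem greedyProd_of_le {n : ℕ} (D : Fin (n + 1) → ℕ) {B : ℕ} (hD : 0 < D 0)
    (hB : D 0 - 1 ≤ B) : greedyProd D B = greedyProd (Fin.tail D) (B - (D 0 - 1)) := by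
  rw [greedyProd_succ, min_eq_right hB, Nat.sub_sub_self hD, Nat.one_mul]

theorem greedyProd_antitone : ∀ {n : ℕ} (D : Fin n → ℕ), Antitone (greedyProd D)
  | 0, _ => fun _ _ _ => le_rfl
  | _ + 1, D => fun B B' h => by
    rw [greedyProd_succ, greedyProd_succ]
    exact Nat.mul_le_mul (by omega) (greedyProd_antitone _ (by omega))

theorem mul_prod_le_mul_greedyProd {n : ℕ} (D : Fin n → ℕ) {a U : ℕ} (ha : 1 ≤ a)
    (hD : ∀ i, a + U ≤ D i) : a * ∏ i, D i ≤ (a + U) * greedyProd D U := by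
  cases n with
  | zero => simp [greedyProd]
  | succ n =>
    have h0 := hD 0
    rw [greedyProd_of_lt D (by omega), Fin.prod_univ_succ, ← mul_assoc, ← mul_assoc]
    refine Nat.mul_le_mul_right _ ?_
    obtain ⟨c, hc⟩ : ∃ c, D 0 = a + U + c := ⟨D 0 - (a + U), by omega⟩
    rw [hc, show a + U + c - U = a + c by omega]
    nlinarith

theorem greedyProd_le_succ_mul : ∀ {n : ℕ} (D : Fin n → ℕ) {t : ℕ} (B : ℕ), (∀ i, t < D i) →
    greedyProd D B ≤ (t + 1) * greedyProd D (B + t)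
  | 0, _, _, _, _ => by simp [greedyProd]
  | n + 1, D, t, B, hD => by
    have h0 := hD 0
    rcases le_or_gt (D 0 - 1) B with hB | hB
    · rw [greedyProd_of_le D (by omega) hB, greedyProd_of_le D (by omega) (by omega),
        show B + t - (D 0 - 1) = B - (D 0 - 1) + t by omega]
      exact greedyProd_le_succ_mul _ _ fun i => hD i.succ
    rcases le_or_gt (B + t) (D 0 - 1) with hBt | hBt
    · rw [greedyProd_of_lt D (by omega), greedyProd_of_lt D (by omega), ← mul_assoc]
      refine Nat.mul_le_mul_right _ ?_
      obtain ⟨c, hc⟩ : ∃ c, D 0 = B + t + c + 1 := ⟨D 0 - (B + t + 1), by omega⟩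
      rw [hc, show B + t + c + 1 - B = t + c + 1 by omega,
        show B + t + c + 1 - (B + t) = c + 1 by omega]
      nlinarith
    · rw [greedyProd_of_lt D (by omega), greedyProd_of_le D (by omega) (by omega)]
      obtain ⟨s, hs⟩ : ∃ s, B + t - (D 0 - 1) = s := ⟨_, rfl⟩
      have := mul_prod_le_mul_greedyProd (Fin.tail D) (a := t - s + 1) (U := s) (by omega)
        fun i => by have := hD i.succ; simp only [Fin.tail]; omega
      rwa [hs, show D 0 - B = t - s + 1 by omega, ← show t - s + 1 + s = t + 1 by omega]

/- Induction on `n`: if `u 0 + ∑ u i.succ < D 0`, moving the whole tail budget onto the first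
coordinate does not increase the product (`mul_prod_le_mul_greedyProd`); otherwise the first
coordinate drops to `1`, and taking the `D 0 - 1 - u 0` extra units from the tail costs at most
that factor plus one (`greedyProd_le_succ_mul`). -/
theorem greedyProd_sum_le_prod_sub : ∀ {n : ℕ} {D : Fin n → ℕ} (u : Fin n → ℕ), Monotone D →
    (∀ i, u i < D i) → greedyProd D (∑ i, u i) ≤ ∏ i, (D i - u i)
  | 0, _, _, _, _ => le_rfl
  | n + 1, D, u, hD, hu => by
    have hle : ∀ i : Fin n, D 0 ≤ D i.succ := fun i => hD (Fin.zero_le _)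
    have ih : greedyProd (Fin.tail D) (∑ i : Fin n, u i.succ) ≤
        ∏ i : Fin n, (D i.succ - u i.succ) :=
      greedyProd_sum_le_prod_sub _ (hD.comp Fin.strictMono_succ.monotone) fun i => hu i.succ
    have hu0 := hu 0
    rw [Fin.sum_univ_succ, Fin.prod_univ_succ]
    set U := ∑ i : Fin n, u i.succ
    rcases lt_or_ge (u 0 + U) (D 0) with hlt | hge
    · rw [greedyProd_of_lt D hlt]
      calc (D 0 - (u 0 + U)) * ∏ i : Fin n, D i.succ
          ≤ (D 0 - (u 0 + U) + U) * greedyProd (Fin.tail D) U :=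
            mul_prod_le_mul_greedyProd (Fin.tail D) (by omega) fun i => by
              have := hle i; simp only [Fin.tail]; omega
        _ ≤ (D 0 - u 0) * ∏ i : Fin n, (D i.succ - u i.succ) :=
            Nat.mul_le_mul (by omega) ih
    · rw [greedyProd_of_le D (by omega) (by omega)]
      calc greedyProd (Fin.tail D) (u 0 + U - (D 0 - 1))
          ≤ (D 0 - 1 - u 0 + 1) *
              greedyProd (Fin.tail D) (u 0 + U - (D 0 - 1) + (D 0 - 1 - u 0)) :=
            greedyProd_le_succ_mul _ _ fun i => by have := hle i; simp only [Fin.tail]; omega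
        _ ≤ (D 0 - u 0) * ∏ i : Fin n, (D i.succ - u i.succ) := by
            rw [show u 0 + U - (D 0 - 1) + (D 0 - 1 - u 0) = U by omega,
              show D 0 - 1 - u 0 + 1 = D 0 - u 0 by omega]
            exact Nat.mul_le_mul_left _ ih

theorem greedyProd_sum_sub_one_add : ∀ {n : ℕ} (D : Fin n → ℕ) (k : ℕ) (hk : k < n) {ℓ : ℕ},
    (∀ i, 1 ≤ D i) → ℓ < D ⟨k, hk⟩ →
    greedyProd D ((∑ i ∈ univ.filter (fun i : Fin n => (i : ℕ) < k), (D i - 1)) + ℓ) =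
      (D ⟨k, hk⟩ - ℓ) * ∏ i ∈ univ.filter (fun i : Fin n => k < (i : ℕ)), D i
  | n + 1, D, 0, _, ℓ, _, hℓ => by
    simp only [Nat.not_lt_zero, filter_false, Finset.sum_empty, zero_add]
    rw [greedyProd_of_lt D hℓ, prod_filter, Fin.prod_univ_succ]
    simp
  | n + 1, D, k + 1, hk, ℓ, hD, hℓ => by
    have ih := greedyProd_sum_sub_one_add (Fin.tail D) k (by omega) (fun i => hD i.succ) hℓ
    simp only [Fin.tail, sum_filter, prod_filter] at ih
    rw [sum_filter, Fin.sum_univ_succ, prod_filter, Fin.prod_univ_succ]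
    simp only [Fin.val_zero, Nat.zero_lt_succ, not_lt_zero, Fin.val_succ,
      Nat.add_lt_add_iff_right, if_true, if_false, one_mul]
    rw [greedyProd_of_le D (hD 0) (by omega), add_assoc, Nat.add_sub_cancel_left, ih]
    rfl

theorem stmt_7_general {K : Type*} [Field K] [DecidableEq K] (n : ℕ) (A : Fin n → Finset K)
    (hA : ∀ i, 2 ≤ (A i).card)
    (hmono : ∀ i j : Fin n, i ≤ j → (A i).card ≤ (A j).card)
    (G : MvPolynomial (Fin n) K) (d k ℓ : ℕ)
    (hd : G.totalDegree = d) (hd1 : 1 ≤ d)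
    (hdegti : ∀ i, MvPolynomial.degreeOf i G ≤ (A i).card - 1)
    (hk : k < n)
    (hdecomp : d = (∑ i ∈ Finset.univ.filter (fun i : Fin n => (i : ℕ) < k),
        ((A i).card - 1)) + ℓ)
    (hl2 : ℓ ≤ (A ⟨k, hk⟩).card - 1) :
    (((Fintype.piFinset A).filter fun x => MvPolynomial.eval x G = 0).card : ℤ) ≤
      (∏ i ∈ Finset.univ.filter (fun i : Fin n => k < (i : ℕ)), ((A i).card : ℤ)) *
        ((∏ i ∈ Finset.univ.filter (fun i : Fin n => (i : ℕ) ≤ k), ((A i).card : ℤ)) -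
          ((A ⟨k, hk⟩).card : ℤ) + (ℓ : ℤ)) := by
  have hG : G ≠ 0 := by
    rintro rfl
    simp only [MvPolynomial.totalDegree_zero] at hd
    omega
  obtain ⟨u, hu, hcount⟩ :=
    MvPolynomial.exists_mem_support_prod_card_sub_le_card_eval_ne_zero hG A
  have hu_lt : ∀ i, u i < #(A i) := fun i => by
    have := (MvPolynomial.monomial_le_degreeOf i hu).trans (hdegti i)
    have := hA i
    omega
  have hu_sum : ∑ i, u i ≤ d := by
    simpa [Finsupp.sum_fintype, hd] using MvPolynomial.le_totalDegree hu
  have hℓ : ℓ < #(A ⟨k, hk⟩) := by have := hA ⟨k, hk⟩; omega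
  have hnonzero : (#(A ⟨k, hk⟩) - ℓ) * ∏ i ∈ univ.filter (fun i : Fin n => k < (i : ℕ)), #(A i) ≤
      #{x ∈ piFinset A | MvPolynomial.eval x G ≠ 0} := by
    rw [← greedyProd_sum_sub_one_add _ k hk (fun i => one_le_two.trans (hA i)) hℓ, ← hdecomp]
    exact (greedyProd_antitone _ hu_sum).trans
      ((greedyProd_sum_le_prod_sub u hmono hu_lt).trans hcount)
  have hpartition : #{x ∈ piFinset A | MvPolynomial.eval x G = 0} +
      #{x ∈ piFinset A | MvPolynomial.eval x G ≠ 0} =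
      (∏ i ∈ univ.filter (fun i : Fin n => (i : ℕ) ≤ k), #(A i)) *
        ∏ i ∈ univ.filter (fun i : Fin n => k < (i : ℕ)), #(A i) := by
    rw [card_filter_add_card_filter_not, card_piFinset,
      ← prod_filter_mul_prod_filter_not univ (fun i : Fin n => (i : ℕ) ≤ k)]
    simp only [not_le]
  have hnonzero' := Nat.cast_le (α := ℤ) |>.mpr hnonzero
  have hpartition' := congrArg (Nat.cast : ℕ → ℤ) hpartition
  push_cast [Nat.cast_sub hℓ.le] at hnonzero' hpartition'
  linear_combination hpartition' + hnonzero'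

theorem stmt_7 {K : Type*} [Field K] [DecidableEq K] (n : ℕ) (A : Fin n → Finset K)
    (hA : ∀ i, 2 ≤ (A i).card)
    (hmono : ∀ i j : Fin n, i ≤ j → (A i).card ≤ (A j).card)
    (G : MvPolynomial (Fin n) K) (d k ℓ : ℕ)
    (hd : G.totalDegree = d) (hd1 : 1 ≤ d)
    (hdegti : ∀ i, MvPolynomial.degreeOf i G ≤ (A i).card - 1)
    (hk : k < n)
    (hdecomp : d = (∑ i ∈ Finset.univ.filter (fun i : Fin n => (i : ℕ) < k),
        ((A i).card - 1)) + ℓ)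
    (hl1 : 1 ≤ ℓ) (hl2 : ℓ ≤ (A ⟨k, hk⟩).card - 1) :
    (((Fintype.piFinset A).filter fun x => MvPolynomial.eval x G = 0).card : ℤ) ≤
      (∏ i ∈ Finset.univ.filter (fun i : Fin n => k < (i : ℕ)), ((A i).card : ℤ)) *
        ((∏ i ∈ Finset.univ.filter (fun i : Fin n => (i : ℕ) ≤ k), ((A i).card : ℤ)) -
          ((A ⟨k, hk⟩).card : ℤ) + (ℓ : ℤ)) :=
  stmt_7_general n A hA hmono G d k ℓ hd hd1 hdegti hk hdecomp hl2
end

section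
/- Let K be a field, A_1,...,A_n finite subsets of K with d_i = |A_i|, 2 ≤ d_i ≤ d_{i+1} for all i, and let d ≥ 1 be an integer with d = Σ_{i=1}^{k}(d_i − 1) + ℓ, 0 ≤ k ≤ n−1, 1 ≤ ℓ ≤ d_{k+1} − 1. Then for every polynomial F ∈ K[t_1,...,t_n] of total degree at most d which does not vanish identically on X* = A_1 × ... × A_n, the number of zeros of F in X* is at most d_1 ⋯ d_n − d_{k+1} ⋯ d_n + ℓ d_{k+2} ⋯ d_n. -/
/-!
Reducing `F` modulo the polynomials `∏_{a ∈ A i} (t_i - a)` keeps its values on the grid and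
does not raise its degree, and afterwards `deg_{t_i} F < |A_i|`. For such `F`, induction on
the number of variables through the leading coefficient in `t_0` (the Alon–Füredi argument)
produces `1 ≤ y_i ≤ |A_i|` with `∑ (|A_i| - y_i) ≤ deg F` and at least `∏ y_i` non-zeros
of `F` on the grid. When the `|A_i|` are sorted, an exchange argument shows that `∏ y_i` is
then at least the product of the greedy vector
`(1, …, 1, |A_k| - ℓ, |A_{k+1}|, …, |A_{n-1}|)`.
-/

open Finset Fintype

theorem Nat.mul_le_mul_add_sub {a b c : ℕ} (hca : c ≤ a) (hab : a ≤ b) :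
    c * b ≤ a * (b + c - a) := by
  obtain ⟨e, rfl⟩ := Nat.exists_eq_add_of_le hca
  obtain ⟨f, rfl⟩ := Nat.exists_eq_add_of_le hab
  rw [show c + e + f + c - (c + e) = c + f by omega]
  nlinarith

@[to_additive]
theorem Fin.prod_Ioi_castSucc {M : Type*} [CommMonoid M] {m : ℕ} (f : Fin (m + 1) → M)
    (j : Fin m) : ∏ i ∈ Ioi j.castSucc, f i = f j.succ * ∏ i ∈ Ioi j, f i.succ := by
  rw [← Fin.prod_Ioi_succ, mul_prod_Ioi_eq_prod_Ici]
  congr 1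
  ext i
  simp [Fin.lt_def, Fin.le_def]

theorem mul_prod_Ioi_le_prod_of_sum_le {n : ℕ} {d y : Fin n → ℕ} (hd : Monotone d)
    (hy : ∀ i, 1 ≤ y i) (hyd : ∀ i, y i ≤ d i) {k : Fin n} {c : ℕ} (hc : c ≤ d k)
    (hsum : k + c + ∑ i ∈ Ioi k, d i ≤ ∑ i, y i) :
    c * ∏ i ∈ Ioi k, d i ≤ ∏ i, y i := by
  induction n generalizing c with
  | zero => exact k.elim0
  | succ m ih =>
    have ih' := @ih (fun j => d j.succ) (fun j => y j.succ)
      (hd.comp Fin.strictMono_succ.monotone) (fun j => hy _) (fun j => hyd _)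
    have htail : 1 ≤ ∏ j : Fin m, y j.succ := one_le_prod' fun j _ => hy _
    rw [Fin.sum_univ_succ] at hsum
    rw [Fin.prod_univ_succ]
    -- Exchange step: a surplus `y 0 - c` is moved to position `k + 1` of the tail, a deficit
    -- to position `k - 1`.
    by_cases hcy : c ≤ y 0
    · induction k using Fin.lastCases with
      | last =>
        rw [Ioi_eq_empty.2 fun i _ => Fin.le_last i, Finset.prod_empty, mul_one]
        exact hcy.trans (Nat.le_mul_of_pos_right _ htail)
      | cast j =>
        have hy0 : y 0 ≤ d j.succ := (hyd 0).trans (hd (Fin.zero_le _))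
        rw [Fin.sum_Ioi_castSucc, Fin.val_castSucc] at hsum
        rw [Fin.prod_Ioi_castSucc]
        calc c * (d j.succ * ∏ i ∈ Ioi j, d i.succ)
            ≤ y 0 * (d j.succ + c - y 0) * ∏ i ∈ Ioi j, d i.succ := by
              rw [← mul_assoc]; exact Nat.mul_le_mul_right _ (Nat.mul_le_mul_add_sub hcy hy0)
          _ ≤ y 0 * ∏ j : Fin m, y j.succ := by
              rw [mul_assoc]; gcongr; exact ih' (by omega) (by omega)
    · induction k using Fin.cases with
      | zero =>
        have : ∑ j : Fin m, y j.succ ≤ ∑ j : Fin m, d j.succ := sum_le_sum fun j _ => hyd _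
        rw [Fin.sum_Ioi_zero] at hsum
        omega
      | succ j =>
        have hy0 := hy 0
        rw [Fin.sum_Ioi_succ, Fin.val_succ] at hsum
        rw [Fin.prod_Ioi_succ]
        calc c * ∏ i ∈ Ioi j, d i.succ
            ≤ y 0 * (c + 1 - y 0) * ∏ i ∈ Ioi j, d i.succ := by
              simpa using Nat.mul_le_mul_right _ (Nat.mul_le_mul_add_sub hy0 (le_of_not_ge hcy))
          _ ≤ y 0 * ∏ j : Fin m, y j.succ := by
              rw [mul_assoc]; gcongr; exact ih' (by omega) (by omega)

theorem Fin.card_filter_piFinset_succ {α : Type*} {n : ℕ} (A : Fin (n + 1) → Finset α)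
    (P : (Fin (n + 1) → α) → Prop) [DecidablePred P] :
    #{x ∈ piFinset A | P x} =
      ∑ x' ∈ piFinset fun j => A j.succ, #{a ∈ A 0 | P (Fin.cons a x')} := by
  have h := filter_piFinset_eq_map_consEquiv A (fun _ => True)
  simp only [filter_true] at h
  rw [h, filter_map, card_map, card_filter, sum_product_right]
  refine sum_congr rfl fun x' _ => ?_
  rw [card_filter]
  rfl

namespace MvPolynomial

open MonomialOrder

variable {R : Type*} [CommRing R] {σ : Type*}

theorem _root_.MonomialOrder.degree_prod_X_sub_C [Nontrivial R] (m : MonomialOrder σ)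
    (S : Finset R) (i : σ) :
    m.degree (∏ a ∈ S, (X i - C a)) = Finsupp.single i #S := by
  rw [m.degree_prod_of_regular fun a _ => by rw [m.monic_X_sub_C]; exact isRegular_one]
  simp [m.degree_X_sub_C]

theorem exists_degreeOf_lt_card_eval_eq [Nontrivial R] [Finite σ] (S : σ → Finset R)
    (hS : ∀ i, (S i).Nonempty) (f : MvPolynomial σ R) :
    ∃ g : MvPolynomial σ R, (∀ i, g.degreeOf i < #(S i)) ∧
      g.totalDegree ≤ f.totalDegree ∧
      ∀ x : σ → R, (∀ i, x i ∈ S i) → eval x g = eval x f := by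
  let : LinearOrder σ := WellOrderingRel.isWellOrder.linearOrder
  obtain ⟨h, r, hf, hh, hr⟩ := degLex.div (b := fun i ↦ ∏ a ∈ S i, (X i - C a))
      (fun i ↦ by simp [(Monic.prod fun a _ => degLex.monic_X_sub_C i a).leadingCoeff_eq_one]) f
  refine ⟨r, fun i => ?_, ?_, fun x hx => ?_⟩
  · rw [degreeOf_eq_sup, Finset.sup_lt_iff (by simp [hS i])]
    intro c hc
    simpa [degree_prod_X_sub_C] using hr c hc i
  · rw [eq_sub_of_add_eq' hf.symm]
    refine (totalDegree_sub _ _).trans (max_le le_rfl ?_)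
    rw [Finsupp.linearCombination_apply, Finsupp.sum]
    refine totalDegree_finsetSum_le fun i _ => ?_
    rw [smul_eq_mul, mul_comm]
    exact degLex_totalDegree_monotone (hh i)
  · rw [hf, map_add, Finsupp.linearCombination_apply, map_finsuppSum, Finsupp.sum,
      Finset.sum_eq_zero, zero_add]
    intro i _
    rw [smul_eq_mul, map_mul, map_prod, Finset.prod_eq_zero (hx i) (by simp), mul_zero]

variable [IsDomain R] [DecidableEq R]

theorem exists_prod_le_card_eval_ne_zero_of_degreeOf_lt {n : ℕ} (A : Fin n → Finset R)
    {F : MvPolynomial (Fin n) R} (hF : F ≠ 0) (hdeg : ∀ i, F.degreeOf i < #(A i)) :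
    ∃ y : Fin n → ℕ, (∀ i, 1 ≤ y i) ∧ (∀ i, y i ≤ #(A i)) ∧
      ∑ i, #(A i) ≤ F.totalDegree + ∑ i, y i ∧
      ∏ i, y i ≤ #{x ∈ piFinset A | eval x F ≠ 0} := by
  induction n with
  | zero =>
    rw [F.eq_C_of_isEmpty, Ne, C_eq_zero] at hF
    rw [F.eq_C_of_isEmpty]
    exact ⟨fun _ => 1, fun _ => le_rfl, fun i => i.elim0, by simp, by simp [hF]⟩
  | succ m ih =>
    set Q := finSuccEquiv R m F
    have hQ : Q ≠ 0 := EmbeddingLike.map_ne_zero_iff.2 hF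
    have hQdeg : Q.natDegree = F.degreeOf 0 := natDegree_finSuccEquiv F
    have hlc : Q.leadingCoeff ≠ 0 := Polynomial.leadingCoeff_ne_zero.2 hQ
    set G : Finset (Fin m → R) := piFinset fun j => A j.succ
    obtain ⟨y', hy'1, hy'A, hy'sum, hy'prod⟩ := ih (fun j => A j.succ) hlc
      fun j => (degreeOf_coeff_finSuccEquiv F j _).trans_lt (hdeg j.succ)
    have hdeg_lc : Q.leadingCoeff.totalDegree + Q.natDegree ≤ F.totalDegree :=
      totalDegree_coeff_finSuccEquiv_add_le F _ hlc
    have hslice : ∀ x' ∈ G, eval x' Q.leadingCoeff ≠ 0 →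
        #(A 0) - Q.natDegree ≤ #{a ∈ A 0 | eval (Fin.cons a x') F ≠ 0} := by
      intro x' _ hx'
      have hmap : (Q.map (eval x')).natDegree = Q.natDegree :=
        Polynomial.natDegree_map_of_leadingCoeff_ne_zero _ hx'
      have hmap0 : Q.map (eval x') ≠ 0 := fun h => hx' <| by
        rw [← Polynomial.leadingCoeff_map_of_leadingCoeff_ne_zero _ hx', h,
          Polynomial.leadingCoeff_zero]
      simpa only [eval_eq_eval_mv_eval', hmap] using
        Polynomial.card_sub_natDegree_le_card_filter_eval_ne_zero hmap0 (A 0)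
    have hc : 1 ≤ #(A 0) - Q.natDegree := by have := hdeg 0; omega
    refine ⟨Fin.cons (#(A 0) - Q.natDegree) y', Fin.forall_fin_succ.2 ⟨hc, hy'1⟩,
      Fin.forall_fin_succ.2 ⟨Nat.sub_le _ _, hy'A⟩, ?_, ?_⟩
    · simp only [Fin.sum_univ_succ, Fin.cons_zero, Fin.cons_succ]
      omega
    · rw [Fin.prod_univ_succ, Fin.card_filter_piFinset_succ]
      simp only [Fin.cons_zero, Fin.cons_succ]
      calc (#(A 0) - Q.natDegree) * ∏ j, y' j
          ≤ (#(A 0) - Q.natDegree) * #{x' ∈ G | eval x' Q.leadingCoeff ≠ 0} := by gcongr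
        _ = ∑ x' ∈ G with eval x' Q.leadingCoeff ≠ 0, (#(A 0) - Q.natDegree) := by
            rw [sum_const, smul_eq_mul, mul_comm]
        _ ≤ ∑ x' ∈ G with eval x' Q.leadingCoeff ≠ 0,
              #{a ∈ A 0 | eval (Fin.cons a x') F ≠ 0} :=
            sum_le_sum fun x' hx' => hslice x' (mem_filter.1 hx').1 (mem_filter.1 hx').2
        _ ≤ _ := sum_le_sum_of_subset (filter_subset _ _)

theorem exists_prod_le_card_eval_ne_zero {n : ℕ} (A : Fin n → Finset R)
    {F : MvPolynomial (Fin n) R}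
    (hF : ∃ x : Fin n → R, (∀ i, x i ∈ A i) ∧ eval x F ≠ 0) :
    ∃ y : Fin n → ℕ, (∀ i, 1 ≤ y i) ∧ (∀ i, y i ≤ #(A i)) ∧
      ∑ i, #(A i) ≤ F.totalDegree + ∑ i, y i ∧
      ∏ i, y i ≤ #{x ∈ piFinset A | eval x F ≠ 0} := by
  obtain ⟨x, hxA, hx⟩ := hF
  obtain ⟨G, hGdeg, hGF, hGeval⟩ :=
    exists_degreeOf_lt_card_eval_eq A (fun i => ⟨x i, hxA i⟩) F
  have hG : G ≠ 0 := by rintro rfl; exact hx (by rw [← hGeval x hxA, map_zero])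
  obtain ⟨y, hy1, hyA, hsum, hprod⟩ :=
    exists_prod_le_card_eval_ne_zero_of_degreeOf_lt A hG hGdeg
  refine ⟨y, hy1, hyA, hsum.trans (by gcongr), hprod.trans_eq ?_⟩
  congr 1
  exact filter_congr fun z hz => by rw [hGeval z (mem_piFinset.1 hz)]

theorem card_filter_eval_eq_zero_le {n : ℕ} (A : Fin n → Finset R)
    (hA : Monotone fun i => #(A i)) (k : Fin n) {ℓ : ℕ} (hℓ : ℓ ≤ #(A k))
    {F : MvPolynomial (Fin n) R} (hdeg : F.totalDegree ≤ ∑ i ∈ Iio k, (#(A i) - 1) + ℓ)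
    (hF : ∃ x : Fin n → R, (∀ i, x i ∈ A i) ∧ eval x F ≠ 0) :
    (#{x ∈ piFinset A | eval x F = 0} : ℤ) ≤
      ∏ i, (#(A i) : ℤ) - ∏ i ∈ Ici k, (#(A i) : ℤ) +
        ℓ * ∏ i ∈ Ioi k, (#(A i) : ℤ) := by
  obtain ⟨y, hy1, hyA, hsum, hprod⟩ := exists_prod_le_card_eval_ne_zero A hF
  have hA1 : ∀ i, 1 ≤ #(A i) := fun i => by
    obtain ⟨x, hx, -⟩ := hF
    exact card_pos.2 ⟨x i, hx i⟩
  have hsplit :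
      ∑ i, #(A i) = ∑ i ∈ Iio k, (#(A i) - 1) + k + #(A k) + ∑ i ∈ Ioi k, #(A i) := by
    have hIio : ∑ i ∈ Iio k, (#(A i) - 1) + k = ∑ i ∈ Iio k, #(A i) := by
      rw [← Fin.card_Iio k, card_eq_sum_ones (Iio k), ← sum_add_distrib]
      exact sum_congr rfl fun i _ => Nat.sub_add_cancel (hA1 i)
    rw [← sum_filter_add_sum_filter_not univ (· < k), filter_gt_eq_Iio]
    simp only [not_lt, filter_le_eq_Ici, ← add_sum_Ioi_eq_sum_Ici]
    omega
  have hmin := mul_prod_Ioi_le_prod_of_sum_le hA hy1 hyA (c := #(A k) - ℓ) (Nat.sub_le _ _)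
    (by omega)
  have hcount := card_filter_add_card_filter_not (s := piFinset A) (p := fun x => eval x F = 0)
  rw [card_piFinset] at hcount
  simp only [ne_eq] at hprod
  have hzeros : #{x ∈ piFinset A | eval x F = 0} + (#(A k) - ℓ) * ∏ i ∈ Ioi k, #(A i)
      ≤ ∏ i, #(A i) := by omega
  zify [hℓ] at hzeros
  rw [← mul_prod_Ioi_eq_prod_Ici]
  linear_combination hzeros

end MvPolynomial

theorem stmt_8_general {K : Type*} [Field K] [DecidableEq K] (n : ℕ) (A : Fin n → Finset K)
    (hmono : ∀ i j : Fin n, i ≤ j → (A i).card ≤ (A j).card)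
    (d k ℓ : ℕ) (hk : k < n)
    (hdecomp : d = (∑ i ∈ Finset.univ.filter (fun i : Fin n => (i : ℕ) < k),
        ((A i).card - 1)) + ℓ)
    (hl2 : ℓ ≤ (A ⟨k, hk⟩).card - 1)
    (F : MvPolynomial (Fin n) K) (hdeg : F.totalDegree ≤ d)
    (hnz : ∃ x : Fin n → K, (∀ i, x i ∈ A i) ∧ MvPolynomial.eval x F ≠ 0) :
    (((Fintype.piFinset A).filter fun x => MvPolynomial.eval x F = 0).card : ℤ) ≤
      (∏ i, ((A i).card : ℤ)) -
        (∏ i ∈ Finset.univ.filter (fun i : Fin n => k ≤ (i : ℕ)), ((A i).card : ℤ)) +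
        (ℓ : ℤ) * ∏ i ∈ Finset.univ.filter (fun i : Fin n => k < (i : ℕ)), ((A i).card : ℤ) := by
  have hIio : univ.filter (fun i : Fin n => (i : ℕ) < k) = Iio ⟨k, hk⟩ := by
    ext; simp [Fin.lt_def]
  have hIci : univ.filter (fun i : Fin n => k ≤ (i : ℕ)) = Ici ⟨k, hk⟩ := by
    ext; simp [Fin.le_def]
  have hIoi : univ.filter (fun i : Fin n => k < (i : ℕ)) = Ioi ⟨k, hk⟩ := by
    ext; simp [Fin.lt_def]
  rw [hIio] at hdecomp
  rw [hIci, hIoi]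
  exact MvPolynomial.card_filter_eval_eq_zero_le A (fun i j hij => hmono i j hij) _
    (hl2.trans (Nat.sub_le _ _)) (hdecomp ▸ hdeg) hnz

theorem stmt_8 {K : Type*} [Field K] [DecidableEq K] (n : ℕ) (A : Fin n → Finset K)
    (hA : ∀ i, 2 ≤ (A i).card)
    (hmono : ∀ i j : Fin n, i ≤ j → (A i).card ≤ (A j).card)
    (d k ℓ : ℕ) (hd1 : 1 ≤ d) (hk : k < n)
    (hdecomp : d = (∑ i ∈ Finset.univ.filter (fun i : Fin n => (i : ℕ) < k),
        ((A i).card - 1)) + ℓ)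
    (hl1 : 1 ≤ ℓ) (hl2 : ℓ ≤ (A ⟨k, hk⟩).card - 1)
    (F : MvPolynomial (Fin n) K) (hdeg : F.totalDegree ≤ d)
    (hnz : ∃ x : Fin n → K, (∀ i, x i ∈ A i) ∧ MvPolynomial.eval x F ≠ 0) :
    (((Fintype.piFinset A).filter fun x => MvPolynomial.eval x F = 0).card : ℤ) ≤
      (∏ i, ((A i).card : ℤ)) -
        (∏ i ∈ Finset.univ.filter (fun i : Fin n => k ≤ (i : ℕ)), ((A i).card : ℤ)) +
        (ℓ : ℤ) * ∏ i ∈ Finset.univ.filter (fun i : Fin n => k < (i : ℕ)), ((A i).card : ℤ) :=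
  stmt_8_general n A hmono d k ℓ hk hdecomp hl2 F hdeg hnz
end

section
/- Let K be a field, A_1,...,A_n finite nonempty subsets of K with |A_i| = d_i ≥ 2, and Y the projective closure of X* = A_1 × ... × A_n in P^n. Then the Castelnuovo–Mumford regularity (index of regularity) of S[u]/I(Y) equals Σ_{i=1}^{n}(d_i − 1), and the degree of S[u]/I(Y) equals d_1 ⋯ d_n. -/
/-!
The Hilbert function of `S[u]/I(Y)` in degree `d` is the rank of the evaluation of degree-`d`
forms at the points `(γ, 1)`, `γ ∈ A_1 × ⋯ × A_n`.

For `d ≥ ∑ (d_i - 1)` this evaluation is onto: homogenizing the product of the Lagrange basis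
polynomials of the `A_i` gives a form of degree `d` that is the indicator of a single point.

For `d < ∑ (d_i - 1)` it is not. With the nodal weights
`w(γ) = ∏_i ∏_{c ∈ A_i, c ≠ γ_i} (γ_i - c)⁻¹`, the functional `F ↦ ∑_γ w(γ) F(γ, 1)` kills every
monomial of degree `< ∑ (d_i - 1)`: some exponent `e_i` is `< d_i - 1`, and
`∑_{b ∈ A_i} w_i(b) b^{e_i}` is the coefficient of `X^{d_i - 1}` in the interpolant of `X^{e_i}`.
It does not kill an indicator, since `w` never vanishes.
-/

open Finset MvPolynomial

namespace Lagrange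

variable {F ι : Type*} [Field F] [DecidableEq ι]

theorem sum_nodalWeight_mul_pow_eq_zero {s : Finset ι} {v : ι → F} (hvs : Set.InjOn v s) {k : ℕ}
    (hk : k + 1 < #s) : ∑ i ∈ s, nodalWeight s v i * v i ^ k = 0 := by
  have hdeg : (Polynomial.X ^ k : Polynomial F).degree < #s :=
    (Polynomial.degree_X_pow_le k).trans_lt (by exact_mod_cast k.lt_succ_self.trans hk)
  have := coeff_eq_sum hvs hdeg
  rw [Polynomial.coeff_X_pow, if_neg (by omega)] at this
  simp [this, nodalWeight, prod_inv_distrib, div_eq_inv_mul]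

theorem eval_basis_eq_nodalWeight_mul (s : Finset ι) (v : ι → F) (i : ι) (x : F) :
    (Lagrange.basis s v i).eval x = nodalWeight s v i * ∏ j ∈ s.erase i, (x - v j) := by
  simp [Lagrange.basis, basisDivisor, Polynomial.eval_prod, nodalWeight, prod_mul_distrib]

theorem eval_basis_eq_ite {s : Finset ι} {v : ι → F} (hvs : Set.InjOn v s) {i j : ι} (hi : i ∈ s)
    (hj : j ∈ s) :
    (Lagrange.basis s v i).eval (v j) = if j = i then 1 else 0 := by
  split_ifs with h
  · subst h
    exact eval_basis_self hvs hj
  · exact eval_basis_of_ne (Ne.symm h) hj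

end Lagrange

section Grid

variable {K : Type*} [Field K] [DecidableEq K] {n : ℕ}

def gridWeight (A : Fin n → Finset K) (γ : Fin n → K) : K :=
  ∏ i, Lagrange.nodalWeight (A i) id (γ i)

theorem gridWeight_ne_zero {A : Fin n → Finset K} {γ : Fin n → K} (hγ : ∀ i, γ i ∈ A i) :
    gridWeight A γ ≠ 0 :=
  prod_ne_zero_iff.2 fun i _ => Lagrange.nodalWeight_ne_zero (Set.injOn_id _) (hγ i)

omit [DecidableEq K] in
theorem eval_snoc_one_monomial (γ : Fin n → K) (α : Fin (n + 1) →₀ ℕ) (c : K) :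
    eval (Fin.snoc γ 1) (monomial α c) = c * ∏ i, γ i ^ α i.castSucc := by
  rw [eval_monomial, Finsupp.prod_fintype _ _ (by simp), Fin.prod_univ_castSucc]
  simp only [Fin.snoc_castSucc, Fin.snoc_last, one_pow, mul_one]

theorem sum_gridWeight_mul_prod_pow_eq_zero (A : Fin n → Finset K) (e : Fin n → ℕ)
    (h : ∑ i, e i < ∑ i, (#(A i) - 1)) :
    ∑ γ ∈ Fintype.piFinset A, gridWeight A γ * ∏ i, γ i ^ e i = 0 := by
  obtain ⟨i₀, -, hi₀⟩ := exists_lt_of_sum_lt h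
  simp_rw [gridWeight, ← prod_mul_distrib]
  rw [← prod_univ_sum A fun i b => Lagrange.nodalWeight (A i) id b * b ^ e i]
  exact prod_eq_zero (mem_univ i₀)
    (Lagrange.sum_nodalWeight_mul_pow_eq_zero (Set.injOn_id _) (by omega))

theorem sum_gridWeight_mul_eval_snoc_one_eq_zero (A : Fin n → Finset K)
    {f : MvPolynomial (Fin (n + 1)) K} (hf : f.totalDegree < ∑ i, (#(A i) - 1)) :
    ∑ γ ∈ Fintype.piFinset A, gridWeight A γ * eval (Fin.snoc γ 1) f = 0 := by
  conv_lhs => enter [2, γ]; rw [f.as_sum, map_sum, mul_sum]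
  rw [sum_comm]
  refine sum_eq_zero fun α hα => ?_
  have hα : ∑ i : Fin n, α i.castSucc < ∑ i, (#(A i) - 1) := by
    refine lt_of_le_of_lt ?_ ((le_totalDegree hα).trans_lt hf)
    rw [Finsupp.sum_fintype _ _ fun _ => rfl, Fin.sum_univ_castSucc]
    omega
  simp_rw [eval_snoc_one_monomial, mul_left_comm _ (coeff α f), ← mul_sum,
    sum_gridWeight_mul_prod_pow_eq_zero A _ hα, mul_zero]

noncomputable def deltaForm (A : Fin n → Finset K) (a : Fin n → K) (d : ℕ) :
    MvPolynomial (Fin (n + 1)) K :=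
  C (gridWeight A a) * X (Fin.last n) ^ (d - ∑ i, (#(A i) - 1)) *
    ∏ i, ∏ b ∈ (A i).erase (a i), (X i.castSucc - C b * X (Fin.last n))

theorem isHomogeneous_deltaForm {A : Fin n → Finset K} {a : Fin n → K} (ha : ∀ i, a i ∈ A i)
    {d : ℕ} (hd : ∑ i, (#(A i) - 1) ≤ d) : (deltaForm A a d).IsHomogeneous d := by
  have hlinear (i : Fin n) (b : K) :
      (X i.castSucc - C b * X (Fin.last n) : MvPolynomial (Fin (n + 1)) K).IsHomogeneous 1 :=
    (isHomogeneous_X _ _).sub (isHomogeneous_C_mul_X _ _)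
  have hprod := IsHomogeneous.prod univ _ (fun i => ∑ _b ∈ (A i).erase (a i), 1) fun i _ =>
    IsHomogeneous.prod ((A i).erase (a i)) _ (fun _ => 1) fun b _ => hlinear i b
  simp only [sum_const, card_erase_of_mem (ha _), smul_eq_mul, mul_one] at hprod
  have := (((isHomogeneous_X K (Fin.last n)).pow (d - ∑ i, (#(A i) - 1))).C_mul
    (gridWeight A a)).mul hprod
  rwa [one_mul, Nat.sub_add_cancel hd] at this

theorem eval_snoc_one_deltaForm {A : Fin n → Finset K} {a γ : Fin n → K} (ha : ∀ i, a i ∈ A i)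
    (hγ : ∀ i, γ i ∈ A i) (d : ℕ) :
    eval (Fin.snoc γ 1) (deltaForm A a d) = if γ = a then 1 else 0 := by
  calc eval (Fin.snoc γ 1) (deltaForm A a d)
      = ∏ i, (Lagrange.basis (A i) id (a i)).eval (γ i) := by
        simp [deltaForm, gridWeight, Lagrange.eval_basis_eq_nodalWeight_mul, prod_mul_distrib]
    _ = ∏ i, if γ i = a i then 1 else 0 :=
        Fintype.prod_congr _ _ fun i => Lagrange.eval_basis_eq_ite (Set.injOn_id _) (ha i) (hγ i)
    _ = if γ = a then 1 else 0 := by simp [Fintype.prod_boole, funext_iff]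

variable (A : Fin n → Finset K)

noncomputable def gridEval (d : ℕ) :
    homogeneousSubmodule (Fin (n + 1)) K d →ₗ[K] (Fintype.piFinset A → K) :=
  LinearMap.pi fun γ => (aeval (Fin.snoc γ.1 1)).toLinearMap ∘ₗ Submodule.subtype _

omit [DecidableEq K] in
@[simp]
theorem gridEval_apply {d : ℕ} (f : homogeneousSubmodule (Fin (n + 1)) K d)
    (γ : Fintype.piFinset A) : gridEval A d f γ = eval (Fin.snoc γ.1 1) f.1 := by
  simp [gridEval]

omit [DecidableEq K] in
theorem gridEval_eq_zero_iff {d : ℕ} (f : homogeneousSubmodule (Fin (n + 1)) K d) :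
    gridEval A d f = 0 ↔ ∀ γ : Fin n → K, (∀ i, γ i ∈ A i) → eval (Fin.snoc γ 1) f.1 = 0 := by
  simp [funext_iff]

theorem range_gridEval_eq_top {d : ℕ} (hd : ∑ i, (#(A i) - 1) ≤ d) :
    LinearMap.range (gridEval A d) = ⊤ := by
  rw [eq_top_iff, ← (Pi.basisFun K _).span_eq, Submodule.span_le]
  rintro _ ⟨⟨a, ha⟩, rfl⟩
  rw [Fintype.mem_piFinset] at ha
  refine ⟨⟨deltaForm A a d, isHomogeneous_deltaForm ha hd⟩, funext fun ⟨γ, hγ⟩ => ?_⟩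
  rw [Fintype.mem_piFinset] at hγ
  simp [eval_snoc_one_deltaForm ha hγ, Pi.single_apply]

theorem range_gridEval_ne_top (hA : ∀ i, (A i).Nonempty) {d : ℕ} (hd : d < ∑ i, (#(A i) - 1)) :
    LinearMap.range (gridEval A d) ≠ ⊤ := by
  obtain ⟨a, ha⟩ := Fintype.piFinset_nonempty.2 hA
  intro htop
  obtain ⟨f, hf⟩ : Pi.single ⟨a, ha⟩ 1 ∈ LinearMap.range (gridEval A d) := htop ▸ Submodule.mem_top
  have hvanish := sum_gridWeight_mul_eval_snoc_one_eq_zero A (f := f.1)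
    ((f.2.totalDegree_le).trans_lt hd)
  rw [← sum_coe_sort] at hvanish
  simp_rw [← gridEval_apply, hf, Pi.single_apply, mul_ite, mul_one, mul_zero,
    Fintype.sum_ite_eq'] at hvanish
  exact gridWeight_ne_zero (Fintype.mem_piFinset.1 ha) hvanish

omit [DecidableEq K] in
theorem finrank_piFinset_fun : Module.finrank K (Fintype.piFinset A → K) = ∏ i, #(A i) := by
  rw [Module.finrank_fintype_fun_eq_card, Fintype.card_coe, Fintype.card_piFinset]

theorem finrank_range_gridEval_eq_prod_iff (hA : ∀ i, (A i).Nonempty) (d : ℕ) :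
    Module.finrank K (LinearMap.range (gridEval A d)) = ∏ i, #(A i) ↔ ∑ i, (#(A i) - 1) ≤ d := by
  refine ⟨fun h => ?_, fun hd => ?_⟩
  · by_contra! hd
    have := Submodule.finrank_lt (range_gridEval_ne_top A hA hd)
    rw [finrank_piFinset_fun] at this
    omega
  · rw [range_gridEval_eq_top A hd, finrank_top, finrank_piFinset_fun]

end Grid

theorem mem_span_homogeneous_vanishing_iff {σ R Γ : Type*} [CommRing R] (p : Γ → σ → R)
    (Q : Γ → Prop) {f : MvPolynomial σ R} {m : ℕ} (hf : f.IsHomogeneous m) :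
    f ∈ Ideal.span {g | (∃ m, g.IsHomogeneous m) ∧ ∀ γ, Q γ → eval (p γ) g = 0} ↔
      ∀ γ, Q γ → eval (p γ) f = 0 := by
  refine ⟨fun hf γ hγ => ?_, fun h => Ideal.subset_span ⟨⟨m, hf⟩, h⟩⟩
  refine (Ideal.span_le (I := RingHom.ker (eval (p γ)))).2 ?_ hf
  exact fun g hg => hg.2 γ hγ

theorem finrank_map_eq_finrank_range {R M N P : Type*} [Ring R] [AddCommGroup M] [Module R M]
    [AddCommGroup N] [Module R N] [AddCommGroup P] [Module R P] {V : Submodule R M}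
    (π : M →ₗ[R] N) (L : V →ₗ[R] P) (h : ∀ v : V, π v = 0 ↔ L v = 0) :
    Module.finrank R (V.map π) = Module.finrank R (LinearMap.range L) := by
  have hker : LinearMap.ker (π ∘ₗ V.subtype) = LinearMap.ker L := by ext v; exact h v
  have hrange : V.map π = LinearMap.range (π ∘ₗ V.subtype) := by
    rw [LinearMap.range_comp, Submodule.range_subtype]
  rw [hrange, ← (LinearMap.quotKerEquivRange _).finrank_eq, hker,
    (LinearMap.quotKerEquivRange L).finrank_eq]

theorem stmt_14 {K : Type*} [Field K] (n : ℕ) (A : Fin n → Finset K)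
    (hA : ∀ i, 2 ≤ (A i).card)
    (I : Ideal (MvPolynomial (Fin (n + 1)) K))
    (hI : I = Ideal.span {f : MvPolynomial (Fin (n + 1)) K |
        (∃ m, f.IsHomogeneous m) ∧
          ∀ γ : Fin n → K, (∀ i, γ i ∈ A i) →
            MvPolynomial.eval (Fin.snoc γ (1 : K)) f = 0}) :
    IsLeast
      {r : ℕ | ∀ d : ℕ, r ≤ d →
        Module.finrank K
            ((MvPolynomial.homogeneousSubmodule (Fin (n + 1)) K d).map
              (Ideal.Quotient.mkₐ K I).toLinearMap) =
          ∏ i, (A i).card}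
      (∑ i, ((A i).card - 1)) := by
  classical
  have hrank (d : ℕ) :=
      finrank_map_eq_finrank_range (Ideal.Quotient.mkₐ K I).toLinearMap (gridEval A d) fun f => by
    rw [AlgHom.toLinearMap_apply, Ideal.Quotient.mkₐ_eq_mk, Ideal.Quotient.eq_zero_iff_mem, hI,
      mem_span_homogeneous_vanishing_iff _ _ f.2, gridEval_eq_zero_iff]
  have hne (i : Fin n) : (A i).Nonempty := card_pos.1 (by have := hA i; omega)
  refine ⟨fun d hd => (hrank d).trans ((finrank_range_gridEval_eq_prod_iff A hne d).2 hd),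
    fun r hr => ?_⟩
  by_contra! hr'
  have := (finrank_range_gridEval_eq_prod_iff A hne _).1 ((hrank _).symm.trans (hr _ le_rfl))
  omega
end
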